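/- arXiv:1102.5386 — 2 statements merged into one kernel-verified Lean document; each statement's English description precedes it below -/
import Mathlib

section
/- For any junction tree of a graph, running the LP with beliefs on the maximal cliques and enforcing consistency on clique intersections gives an LP whose optimal value equals the IP optimal value (the LP is tight on a junction tree). -/
/-! Leaf elimination, i.e. dynamic programming along the junction tree. Point-mass beliefs show
that the LP value is at most the IP value. Conversely, let `ℓ` be a leaf clique with neighbour
`m`. By the running intersection property, `C ℓ` meets every other clique inside the separator
`C ℓ ∩ C m`. Fold into `θ m` the message `g z = min {θ ℓ y | y restricts to z on the separator}`
and delete `ℓ`. Since `b ℓ` and `b m` have the same marginal on the separator, the LP objective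
does not increase; and an assignment of the smaller tree, completed on `C ℓ` by a minimizing
`y`, has the same energy in the original tree. -/

open Finset

section

variable {α β ι : Type*}

local notation "restr" => Finset.restrict₂ (π := fun _ => β)

namespace SimpleGraph

def RunningIntersection [DecidableEq α] (T : SimpleGraph ι) (C : ι → Finset α) : Prop :=
  ∀ (i j : ι) (p : T.Walk i j), p.IsPath → ∀ k ∈ p.support, C i ∩ C j ⊆ C k

variable [DecidableEq α] {T : SimpleGraph ι} {C : ι → Finset α}

theorem RunningIntersection.induce (hC : T.RunningIntersection C) (s : Set ι) :
    (T.induce s).RunningIntersection fun i => C i := by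
  intro i j p hp k hk
  have hmap := hC _ _ _ (hp.map (f := (Embedding.induce s).toHom) Subtype.val_injective)
  rw [Walk.support_map] at hmap
  exact hmap k (List.mem_map_of_mem hk)

theorem RunningIntersection.inter_subset_of_forall_adj_eq (hC : T.RunningIntersection C)
    (hT : T.Connected) {ℓ m : ι} (hleaf : ∀ k, T.Adj ℓ k → k = m) {i : ι} (hi : i ≠ ℓ) :
    C ℓ ∩ C i ⊆ C m := by
  obtain ⟨p, hp⟩ := hT.exists_isPath ℓ i
  rw [← hleaf _ (p.adj_snd (Walk.not_nil_of_ne hi.symm))]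
  exact hC ℓ i p hp _ (p.getVert_mem_support 1)

end SimpleGraph

theorem SimpleGraph.IsTree.induce_compl_singleton_of_degree_eq_one {T : SimpleGraph ι}
    (hT : T.IsTree) {ℓ : ι} [Fintype (T.neighborSet ℓ)] (hℓ : T.degree ℓ = 1) :
    (T.induce {ℓ}ᶜ).IsTree :=
  ⟨hT.connected.induce_compl_singleton_of_degree_eq_one hℓ, hT.isAcyclic.induce _⟩

theorem Finset.restrict_extend_val (s : Finset α) (y : s → β) (x : α → β) :
    s.restrict (Function.extend Subtype.val y x) = y :=
  funext (Subtype.val_injective.extend_apply y x)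

theorem Finset.restrict_extend_val_of_forall_mem_eq {s u : Finset α} {y : s → β} {x : α → β}
    (hy : ∀ v : s, v.1 ∈ u → y v = x v) :
    u.restrict (Function.extend Subtype.val y x) = u.restrict x := by
  funext v
  by_cases hv : v.1 ∈ s
  · exact (Subtype.val_injective.extend_apply y x ⟨v, hv⟩).trans (hy ⟨v, hv⟩ v.2)
  · exact Function.extend_apply' y x v fun ⟨w, hw⟩ => hv (hw ▸ w.2)

theorem Finset.restrict₂_surjective [Nonempty β] {s t : Finset α} (h : t ⊆ s) :
    Function.Surjective (restr h) := by
  intro z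
  refine ⟨s.restrict (Function.extend Subtype.val z fun _ => Classical.arbitrary β), ?_⟩
  rw [← Function.comp_apply (f := restrict₂ h), restrict₂_comp_restrict, restrict_extend_val]

section Energy

variable [Fintype ι]

def energy (C : ι → Finset α) (θ : ∀ i, (C i → β) → ℝ) (x : α → β) : ℝ :=
  ∑ i, θ i ((C i).restrict x)

variable {C : ι → Finset α}

theorem energy_add (θ ψ : ∀ i, (C i → β) → ℝ) (x : α → β) :
    energy C (θ + ψ) x = energy C θ x + energy C ψ x :=
  sum_add_distrib

theorem energy_single [DecidableEq ι] (m : ι) (φ : (C m → β) → ℝ) (x : α → β) :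
    energy C (Pi.single m φ) x = φ ((C m).restrict x) := by
  rw [energy, Fintype.sum_eq_single m fun i hi => by rw [Pi.single_eq_of_ne hi]; rfl,
    Pi.single_eq_same]

theorem energy_extend_val_eq_add [DecidableEq ι] (θ : ∀ i, (C i → β) → ℝ) {ℓ : ι}
    {y : C ℓ → β} {x : α → β} (hy : ∀ i ≠ ℓ, ∀ v : C ℓ, v.1 ∈ C i → y v = x v) :
    energy C θ (Function.extend Subtype.val y x) =
      θ ℓ y + energy (fun i : ↥({ℓ}ᶜ : Set ι) => C i) (fun i => θ i) x := by
  rw [energy, Fintype.sum_eq_add_sum_subtype_ne _ ℓ, restrict_extend_val]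
  exact congrArg _ (sum_congr rfl fun i _ => by
    rw [restrict_extend_val_of_forall_mem_eq (hy i i.2)])

end Energy

section LPObjective

variable [DecidableEq α] [Fintype β] [Fintype ι]

def lpObjective (C : ι → Finset α) (θ b : ∀ i, (C i → β) → ℝ) : ℝ :=
  ∑ i, ∑ y, θ i y * b i y

variable {C : ι → Finset α}

theorem lpObjective_add (θ ψ b : ∀ i, (C i → β) → ℝ) :
    lpObjective C (θ + ψ) b = lpObjective C θ b + lpObjective C ψ b := by
  simp only [lpObjective, Pi.add_apply, add_mul, sum_add_distrib]

theorem lpObjective_single [DecidableEq ι] (m : ι) (φ : (C m → β) → ℝ)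
    (b : ∀ i, (C i → β) → ℝ) :
    lpObjective C (Pi.single m φ) b = ∑ y, φ y * b m y := by
  rw [lpObjective, Fintype.sum_eq_single m fun i hi => by simp [Pi.single_eq_of_ne hi],
    Pi.single_eq_same]

theorem lpObjective_eq_add_lpObjective_compl [DecidableEq ι] (θ b : ∀ i, (C i → β) → ℝ)
    (ℓ : ι) :
    lpObjective C θ b = ∑ y, θ ℓ y * b ℓ y +
      lpObjective (fun i : ↥({ℓ}ᶜ : Set ι) => C i) (fun i => θ i) (fun i => b i) :=
  Fintype.sum_eq_add_sum_subtype_ne _ ℓ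

theorem lpObjective_single_restrict [DecidableEq β] (θ : ∀ i, (C i → β) → ℝ) (x : α → β) :
    lpObjective C θ (fun i => Pi.single ((C i).restrict x) 1) = energy C θ x := by
  simp [lpObjective, energy, Pi.single_apply]

end LPObjective

section Marginal

variable [DecidableEq α] [Fintype β] [DecidableEq β]

def marginal {s t : Finset α} (h : t ⊆ s) (p : (s → β) → ℝ) (z : t → β) : ℝ :=
  ∑ y : s → β with restr h y = z, p y

theorem sum_mul_restrict₂_eq_sum_mul_marginal {s t : Finset α} (h : t ⊆ s)
    (φ : (t → β) → ℝ) (p : (s → β) → ℝ) :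
    ∑ y : s → β, φ (restr h y) * p y = ∑ z, φ z * marginal h p z := by
  simp_rw [marginal, mul_sum]
  rw [← sum_fiberwise univ (restr h)]
  refine sum_congr rfl fun z _ => sum_congr rfl fun y hy => ?_
  rw [(mem_filter.1 hy).2]

theorem sum_mul_restrict₂_le_of_marginal_eq {s t u : Finset α} (hs : u ⊆ s) (ht : u ⊆ t)
    {g : (u → β) → ℝ} {θ : (s → β) → ℝ} (hg : ∀ y, g (restr hs y) ≤ θ y)
    {p : (s → β) → ℝ} {q : (t → β) → ℝ} (hp : ∀ y, 0 ≤ p y)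
    (hpq : marginal hs p = marginal ht q) :
    ∑ y : t → β, g (restr ht y) * q y ≤ ∑ y, θ y * p y :=
  calc ∑ y : t → β, g (restr ht y) * q y = ∑ y : s → β, g (restr hs y) * p y := by
        rw [sum_mul_restrict₂_eq_sum_mul_marginal, sum_mul_restrict₂_eq_sum_mul_marginal, hpq]
    _ ≤ ∑ y, θ y * p y := sum_le_sum fun y _ => mul_le_mul_of_nonneg_right (hg y) (hp y)

theorem exists_energy_le_lpObjective [Nonempty β] [Fintype ι] (T : SimpleGraph ι)
    (hT : T.IsTree) (C : ι → Finset α) (hC : T.RunningIntersection C)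
    (θ b : ∀ i, (C i → β) → ℝ) (hb0 : ∀ i y, 0 ≤ b i y) (hb1 : ∀ i, ∑ y, b i y = 1)
    (hb : ∀ i j, T.Adj i j →
      marginal inter_subset_left (b i) = marginal inter_subset_right (b j)) :
    ∃ x, energy C θ x ≤ lpObjective C θ b := by
  classical
  obtain ⟨n, hn⟩ : ∃ n, Fintype.card ι = n := ⟨_, rfl⟩
  induction n using Nat.strong_induction_on generalizing ι with | _ n IH
  rcases subsingleton_or_nontrivial ι with _ | _
  · obtain ⟨i₀⟩ := hT.connected.nonempty
    obtain ⟨y, -, hy⟩ := exists_min_image univ (θ i₀) univ_nonempty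
    refine ⟨Function.extend Subtype.val y fun _ => Classical.arbitrary β, ?_⟩
    rw [energy, lpObjective, Fintype.sum_subsingleton _ i₀, Fintype.sum_subsingleton _ i₀,
      restrict_extend_val]
    calc θ i₀ y = ∑ y', θ i₀ y * b i₀ y' := by rw [← mul_sum, hb1, mul_one]
      _ ≤ ∑ y', θ i₀ y' * b i₀ y' :=
        sum_le_sum fun y' _ => mul_le_mul_of_nonneg_right (hy y' (mem_univ _)) (hb0 _ _)
  · obtain ⟨ℓ, hℓ⟩ := hT.exists_vert_degree_one_of_nontrivial
    obtain ⟨m, hℓm, hleaf⟩ := SimpleGraph.degree_eq_one_iff_existsUnique_adj.mp hℓ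
    have hsep (i : ι) (hi : i ≠ ℓ) : C ℓ ∩ C i ⊆ C m :=
      hC.inter_subset_of_forall_adj_eq hT.connected hleaf hi
    choose best hbest using fun z => Set.exists_min_image
      (restr (inter_subset_left : C ℓ ∩ C m ⊆ C ℓ) ⁻¹' {z}) (θ ℓ) (Set.toFinite _)
      (restrict₂_surjective _ z)
    let ι' := ↥({ℓ}ᶜ : Set ι)
    let θ' : ∀ i : ι', (C i → β) → ℝ := (fun i : ι' => θ i) +
      Pi.single (M := fun i : ι' => (C i → β) → ℝ) ⟨m, hℓm.ne'⟩
        fun y => θ ℓ (best (restr inter_subset_right y))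
    obtain ⟨x, hx⟩ := IH _ (hn ▸ Fintype.card_subtype_lt (x := ℓ) (by simp)) (T.induce {ℓ}ᶜ)
      (hT.induce_compl_singleton_of_degree_eq_one hℓ) (fun i => C i) (hC.induce _) θ'
      (fun i => b i) (fun i => hb0 i) (fun i => hb1 i) (fun i j hij => hb i j hij) rfl
    refine ⟨Function.extend Subtype.val (best ((C ℓ ∩ C m).restrict x)) x, ?_⟩
    calc _ = θ ℓ (best ((C ℓ ∩ C m).restrict x)) +
            energy (fun i : ι' => C i) (fun i => θ i) x :=
          energy_extend_val_eq_add θ fun i hi v hv =>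
            congrFun (hbest _).1 ⟨v, mem_inter.2 ⟨v.2, hsep i hi (mem_inter.2 ⟨v.2, hv⟩)⟩⟩
      _ = energy (fun i : ι' => C i) θ' x := by
          rw [energy_add, energy_single, ← restrict₂_comp_restrict inter_subset_right, add_comm]
          rfl
      _ ≤ lpObjective (fun i : ι' => C i) θ' (fun i => b i) := hx
      _ = lpObjective (fun i : ι' => C i) (fun i => θ i) (fun i => b i) +
            ∑ y, θ ℓ (best (restr inter_subset_right y)) * b m y := by
          rw [lpObjective_add, lpObjective_single]
      _ ≤ lpObjective (fun i : ι' => C i) (fun i => θ i) (fun i => b i) +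
            ∑ y, θ ℓ y * b ℓ y := by
          gcongr
          exact sum_mul_restrict₂_le_of_marginal_eq _ _ (g := fun z => θ ℓ (best z))
            (fun y => (hbest _).2 y rfl) (hb0 ℓ) (hb ℓ m hℓm)
      _ = lpObjective C θ b := by rw [lpObjective_eq_add_lpObjective_compl _ _ ℓ, add_comm]

end Marginal

end

/-- The LP over the maximal cliques of a junction tree (with consistency enforced on
clique intersections along tree edges) is tight: its optimal value equals the optimal
value of the integer program `min_{x ∈ {±1}^n} ∑_C θ_C(x_C)`. -/
theorem stmt14 (n : ℕ) (ι : Type*) [Fintype ι] (T : SimpleGraph ι) (hT : T.IsTree)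
    (C : ι → Finset (Fin n))
    (hRIP : ∀ (i j : ι) (p : T.Walk i j), p.IsPath → ∀ k ∈ p.support, C i ∩ C j ⊆ C k)
    (θ : (i : ι) → ({ v // v ∈ C i } → Bool) → ℝ) :
    sInf {val : ℝ | ∃ b : (i : ι) → ({ v // v ∈ C i } → Bool) → ℝ,
        (∀ i xC, 0 ≤ b i xC) ∧ (∀ i, ∑ xC, b i xC = 1) ∧
        (∀ i j : ι, T.Adj i j → ∀ z : { v // v ∈ C i ∩ C j } → Bool,
          (∑ xC ∈ Finset.univ.filter (fun xC : { v // v ∈ C i } → Bool =>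
              ∀ v : { v // v ∈ C i ∩ C j },
                xC ⟨v.1, (Finset.mem_inter.mp v.2).1⟩ = z v), b i xC) =
          (∑ xC ∈ Finset.univ.filter (fun xC : { v // v ∈ C j } → Bool =>
              ∀ v : { v // v ∈ C i ∩ C j },
                xC ⟨v.1, (Finset.mem_inter.mp v.2).2⟩ = z v), b j xC)) ∧
        (∑ i, ∑ xC, θ i xC * b i xC) = val} =
      sInf {val : ℝ | ∃ x : Fin n → Bool, (∑ i, θ i (fun v => x v.1)) = val} := by
  apply csInf_eq_csInf_of_forall_exists_le
  · rintro _ ⟨b, hb0, hb1, hb, rfl⟩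
    obtain ⟨x, hx⟩ := exists_energy_le_lpObjective T hT C hRIP θ b hb0 hb1 fun i j hij =>
      funext fun z => by simpa only [marginal, funext_iff, restrict₂] using hb i j hij z
    exact ⟨_, ⟨x, rfl⟩, hx⟩
  · rintro _ ⟨x, rfl⟩
    refine ⟨_, ⟨fun i => Pi.single ((C i).restrict x) 1, ?_, ?_, ?_,
      lpObjective_single_restrict θ x⟩, le_rfl⟩
    · intro i y
      simp only [Pi.single_apply]
      positivity
    · simp
    · intro i j _ z
      simp [sum_pi_single']
end

section
/- For two consistent beliefs on adjacent cliques of a tree of two cliques C₁, C₂ with separator S = C₁ ∩ C₂, there exists a joint distribution on x_{C₁∪C₂} whose marginals on C₁ and C₂ are the given beliefs, namely μ(x) = b_{C₁}(x_{C₁}) b_{C₂}(x_{C₂}) / b_S(x_S) (with the convention 0/0 = 0). -/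
/-!
Gluing identifies the assignments `z` on `C₁ ∪ C₂` with `z|C₁ = x` and the assignments `y` on
`C₂` that agree with `x` on `S`. Summing `μ` over this fibre therefore gives
`b₁(x) / b_S(x_S) * Σ_{y_S = x_S} b₂(y) = b₁(x) / b_S(x_S) * b_S(x_S) = b₁(x)`, the last step
also when `b_S(x_S) = 0`, because `0 ≤ b₁(x) ≤ b_S(x_S)`. The same argument gives the marginal
on `C₂`, and summing the marginal on `C₁` over `x` gives total mass one.
-/

open Finset

noncomputable def jointMu (ι : Type*) [DecidableEq ι] (C₁ C₂ : Finset ι)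
    (b1 : ({ v // v ∈ C₁ } → Bool) → ℝ) (b2 : ({ v // v ∈ C₂ } → Bool) → ℝ)
    (bS : ({ v // v ∈ C₁ ∩ C₂ } → Bool) → ℝ)
    (x : { v // v ∈ C₁ ∪ C₂ } → Bool) : ℝ :=
  b1 (fun v => x ⟨v.1, Finset.mem_union_left _ v.2⟩) *
    b2 (fun v => x ⟨v.1, Finset.mem_union_right _ v.2⟩) /
    bS (fun v => x ⟨v.1, Finset.mem_union_left _ (Finset.mem_inter.mp v.2).1⟩)

theorem Finset.eq_zero_of_sum_fiber_eq_zero {β γ M : Type*} [Fintype β] [DecidableEq γ]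
    [AddCommMonoid M] [PartialOrder M] [IsOrderedAddMonoid M]
    {b : β → M} (hb : ∀ z, 0 ≤ b z) (f : β → γ) {z : β}
    (h : ∑ w with f w = f z, b w = 0) : b z = 0 :=
  (sum_eq_zero_iff_of_nonneg fun w _ => hb w).mp h z (by simp)

section

variable {ι : Type*} {π : ι → Type*} [DecidableEq ι] {s t : Finset ι}

def Finset.unionGlue (x : (i : s) → π i) (y : (i : t) → π i) (v : (s ∪ t : Finset ι)) :
    π v :=
  if h : v.1 ∈ s then x ⟨v.1, h⟩ else y ⟨v.1, (mem_union.mp v.2).resolve_left h⟩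

theorem Finset.restrict₂_left_unionGlue (x : (i : s) → π i) (y : (i : t) → π i) :
    restrict₂ subset_union_left (unionGlue x y) = x := by
  funext v
  simp [unionGlue, v.2]

theorem Finset.restrict₂_right_unionGlue {x : (i : s) → π i} {y : (i : t) → π i}
    (h : restrict₂ inter_subset_left x = restrict₂ inter_subset_right y) :
    restrict₂ subset_union_right (unionGlue x y) = y := by
  funext v
  by_cases hv : v.1 ∈ s
  · simpa [unionGlue, hv] using congrFun h ⟨v.1, mem_inter.mpr ⟨hv, v.2⟩⟩
  · simp [unionGlue, hv]

theorem Finset.unionGlue_restrict₂ (z : (i : (s ∪ t : Finset ι)) → π i) :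
    unionGlue (restrict₂ subset_union_left z) (restrict₂ subset_union_right z) = z := by
  funext v
  by_cases hv : v.1 ∈ s <;> simp [unionGlue, hv]

variable [∀ i, Fintype (π i)] [∀ i, DecidableEq (π i)] {M : Type*} [AddCommMonoid M]

theorem Finset.filter_forall_eq_restrict₂ (hst : s ⊆ t) (x : (i : s) → π i) :
    univ.filter (fun z : (i : t) → π i => ∀ v : s, z ⟨v.1, hst v.2⟩ = x v) =
      univ.filter (fun z => restrict₂ hst z = x) :=
  filter_congr fun _ _ => funext_iff.symm

theorem Finset.sum_fiber_restrict₂_union_left (x : (i : s) → π i)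
    (g : ((i : s) → π i) → ((i : t) → π i) → M) :
    ∑ z ∈ univ.filter (fun z : (i : (s ∪ t : Finset ι)) → π i =>
        restrict₂ subset_union_left z = x),
        g (restrict₂ subset_union_left z) (restrict₂ subset_union_right z) =
      ∑ y ∈ univ.filter (fun y : (i : t) → π i =>
        restrict₂ inter_subset_right y = restrict₂ inter_subset_left x), g x y := by
  refine sum_nbij' (restrict₂ subset_union_right) (unionGlue x) ?_ ?_ ?_ ?_ ?_ <;>
    simp only [mem_filter, mem_univ, true_and]
  · rintro z rfl; rfl
  · exact fun y _ => restrict₂_left_unionGlue x y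
  · rintro z rfl; exact unionGlue_restrict₂ z
  · exact fun y hy => restrict₂_right_unionGlue hy.symm
  · rintro z rfl; rfl

theorem Finset.sum_fiber_restrict₂_union_right (y : (i : t) → π i)
    (g : ((i : s) → π i) → ((i : t) → π i) → M) :
    ∑ z ∈ univ.filter (fun z : (i : (s ∪ t : Finset ι)) → π i =>
        restrict₂ subset_union_right z = y),
        g (restrict₂ subset_union_left z) (restrict₂ subset_union_right z) =
      ∑ x ∈ univ.filter (fun x : (i : s) → π i =>
        restrict₂ inter_subset_left x = restrict₂ inter_subset_right y), g x y := by
  refine sum_nbij' (restrict₂ subset_union_left) (unionGlue · y) ?_ ?_ ?_ ?_ ?_ <;>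
    simp only [mem_filter, mem_univ, true_and]
  · rintro z rfl; rfl
  · exact fun x hx => restrict₂_right_unionGlue hx
  · rintro z rfl; exact unionGlue_restrict₂ z
  · exact fun x _ => restrict₂_left_unionGlue x y
  · rintro z rfl; rfl

end

-- `restrict₂` is dependently typed; fixing the fibre to `Bool` spares Lean the higher-order
-- unification `?π ↑i =?= Bool`, which it does not solve.
local notation "res" => restrict₂ (π := fun _ => Bool)

section

variable {ι : Type*} [DecidableEq ι] {C₁ C₂ : Finset ι}
  {b1 : (C₁ → Bool) → ℝ} {b2 : (C₂ → Bool) → ℝ}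
  {bS : ((C₁ ∩ C₂ : Finset ι) → Bool) → ℝ}

theorem jointMu_nonneg (h1pos : ∀ z, 0 ≤ b1 z) (h2pos : ∀ z, 0 ≤ b2 z)
    (hSpos : ∀ z, 0 ≤ bS z)
    (x : (C₁ ∪ C₂ : Finset ι) → Bool) : 0 ≤ jointMu ι C₁ C₂ b1 b2 bS x :=
  div_nonneg (mul_nonneg (h1pos _) (h2pos _)) (hSpos _)

theorem sum_fiber_jointMu_left (h1pos : ∀ z, 0 ≤ b1 z)
    (h1marg : ∀ zS, bS zS = ∑ z with res inter_subset_left z = zS, b1 z)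
    (h2marg : ∀ zS, bS zS = ∑ z with res inter_subset_right z = zS, b2 z)
    (x : C₁ → Bool) :
    ∑ z with res subset_union_left z = x, jointMu ι C₁ C₂ b1 b2 bS z = b1 x := by
  set xS := res inter_subset_left x
  have hx : bS xS = 0 → b1 x = 0 := fun h =>
    eq_zero_of_sum_fiber_eq_zero h1pos _ (by rw [← h1marg]; exact h)
  calc _ = ∑ y with res inter_subset_right y = xS, b1 x * b2 y / bS xS :=
        sum_fiber_restrict₂_union_left (π := fun _ => Bool) x
          fun x y => b1 x * b2 y / bS (res inter_subset_left x)
    _ = b1 x / bS xS * bS xS := by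
        rw [h2marg, mul_sum]
        exact sum_congr rfl fun _ _ => by ring
    _ = b1 x := div_mul_cancel_of_imp hx

theorem sum_fiber_jointMu_right (h2pos : ∀ z, 0 ≤ b2 z)
    (h1marg : ∀ zS, bS zS = ∑ z with res inter_subset_left z = zS, b1 z)
    (h2marg : ∀ zS, bS zS = ∑ z with res inter_subset_right z = zS, b2 z)
    (y : C₂ → Bool) :
    ∑ z with res subset_union_right z = y, jointMu ι C₁ C₂ b1 b2 bS z = b2 y := by
  set yS := res inter_subset_right y
  have hy : bS yS = 0 → b2 y = 0 := fun h =>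
    eq_zero_of_sum_fiber_eq_zero h2pos _ (by rw [← h2marg]; exact h)
  calc _ = ∑ x with res inter_subset_left x = yS, b1 x * b2 y / bS yS :=
        sum_fiber_restrict₂_union_right (π := fun _ => Bool) y
          fun x y => b1 x * b2 y / bS (res inter_subset_right y)
    _ = b2 y / bS yS * bS yS := by
        rw [h1marg, mul_sum]
        exact sum_congr rfl fun _ _ => by ring
    _ = b2 y := div_mul_cancel_of_imp hy

end

theorem stmt15_general (ι : Type*) [DecidableEq ι] (C₁ C₂ : Finset ι)
    (b1 : ({ v // v ∈ C₁ } → Bool) → ℝ) (b2 : ({ v // v ∈ C₂ } → Bool) → ℝ)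
    (bS : ({ v // v ∈ C₁ ∩ C₂ } → Bool) → ℝ)
    (h1pos : ∀ z, 0 ≤ b1 z) (h1sum : ∑ z, b1 z = 1)
    (h2pos : ∀ z, 0 ≤ b2 z)
    (h1marg : ∀ zS : { v // v ∈ C₁ ∩ C₂ } → Bool,
      bS zS = ∑ z ∈ Finset.univ.filter (fun z : { v // v ∈ C₁ } → Bool =>
        ∀ v : { v // v ∈ C₁ ∩ C₂ }, z ⟨v.1, (Finset.mem_inter.mp v.2).1⟩ = zS v), b1 z)
    (h2marg : ∀ zS : { v // v ∈ C₁ ∩ C₂ } → Bool,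
      bS zS = ∑ z ∈ Finset.univ.filter (fun z : { v // v ∈ C₂ } → Bool =>
        ∀ v : { v // v ∈ C₁ ∩ C₂ }, z ⟨v.1, (Finset.mem_inter.mp v.2).2⟩ = zS v), b2 z) :
    (∀ x, 0 ≤ jointMu ι C₁ C₂ b1 b2 bS x) ∧
    (∑ x, jointMu ι C₁ C₂ b1 b2 bS x = 1) ∧
    (∀ z1 : { v // v ∈ C₁ } → Bool,
      b1 z1 = ∑ x ∈ Finset.univ.filter (fun x : { v // v ∈ C₁ ∪ C₂ } → Bool =>
        ∀ v : { v // v ∈ C₁ }, x ⟨v.1, Finset.mem_union_left _ v.2⟩ = z1 v),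
          jointMu ι C₁ C₂ b1 b2 bS x) ∧
    (∀ z2 : { v // v ∈ C₂ } → Bool,
      b2 z2 = ∑ x ∈ Finset.univ.filter (fun x : { v // v ∈ C₁ ∪ C₂ } → Bool =>
        ∀ v : { v // v ∈ C₂ }, x ⟨v.1, Finset.mem_union_right _ v.2⟩ = z2 v),
          jointMu ι C₁ C₂ b1 b2 bS x) := by
  have h1 : ∀ zS, bS zS = ∑ z with res inter_subset_left z = zS, b1 z :=
    fun zS => by rw [h1marg, filter_forall_eq_restrict₂ (π := fun _ => Bool) inter_subset_left]
  have h2 : ∀ zS, bS zS = ∑ z with res inter_subset_right z = zS, b2 z :=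
    fun zS => by rw [h2marg, filter_forall_eq_restrict₂ (π := fun _ => Bool) inter_subset_right]
  have hSpos : ∀ zS, 0 ≤ bS zS := fun zS => h1 zS ▸ sum_nonneg fun z _ => h1pos z
  have hmarg1 := sum_fiber_jointMu_left h1pos h1 h2
  refine ⟨jointMu_nonneg h1pos h2pos hSpos, ?_, fun x => ?_, fun y => ?_⟩
  · rw [← sum_fiberwise univ (res subset_union_left), ← h1sum]
    exact sum_congr rfl fun x _ => hmarg1 x
  · rw [filter_forall_eq_restrict₂ (π := fun _ => Bool) subset_union_left, hmarg1]
  · rw [filter_forall_eq_restrict₂ (π := fun _ => Bool) subset_union_right,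
      sum_fiber_jointMu_right h2pos h1 h2]

/-- Two consistent clique beliefs on `C₁, C₂` with common separator marginal `b_S`
(`S = C₁ ∩ C₂`) extend to a joint distribution `μ = b₁ b₂ / b_S` on `x_{C₁ ∪ C₂}`
whose marginals on `C₁` and `C₂` are the given beliefs. -/
theorem stmt15 (ι : Type*) [DecidableEq ι] (C₁ C₂ : Finset ι)
    (b1 : ({ v // v ∈ C₁ } → Bool) → ℝ) (b2 : ({ v // v ∈ C₂ } → Bool) → ℝ)
    (bS : ({ v // v ∈ C₁ ∩ C₂ } → Bool) → ℝ)
    (h1pos : ∀ z, 0 ≤ b1 z) (h1sum : ∑ z, b1 z = 1)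
    (h2pos : ∀ z, 0 ≤ b2 z) (h2sum : ∑ z, b2 z = 1)
    (h1marg : ∀ zS : { v // v ∈ C₁ ∩ C₂ } → Bool,
      bS zS = ∑ z ∈ Finset.univ.filter (fun z : { v // v ∈ C₁ } → Bool =>
        ∀ v : { v // v ∈ C₁ ∩ C₂ }, z ⟨v.1, (Finset.mem_inter.mp v.2).1⟩ = zS v), b1 z)
    (h2marg : ∀ zS : { v // v ∈ C₁ ∩ C₂ } → Bool,
      bS zS = ∑ z ∈ Finset.univ.filter (fun z : { v // v ∈ C₂ } → Bool =>
        ∀ v : { v // v ∈ C₁ ∩ C₂ }, z ⟨v.1, (Finset.mem_inter.mp v.2).2⟩ = zS v), b2 z) :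
    (∀ x, 0 ≤ jointMu ι C₁ C₂ b1 b2 bS x) ∧
    (∑ x, jointMu ι C₁ C₂ b1 b2 bS x = 1) ∧
    (∀ z1 : { v // v ∈ C₁ } → Bool,
      b1 z1 = ∑ x ∈ Finset.univ.filter (fun x : { v // v ∈ C₁ ∪ C₂ } → Bool =>
        ∀ v : { v // v ∈ C₁ }, x ⟨v.1, Finset.mem_union_left _ v.2⟩ = z1 v),
          jointMu ι C₁ C₂ b1 b2 bS x) ∧
    (∀ z2 : { v // v ∈ C₂ } → Bool,
      b2 z2 = ∑ x ∈ Finset.univ.filter (fun x : { v // v ∈ C₁ ∪ C₂ } → Bool =>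
        ∀ v : { v // v ∈ C₂ }, x ⟨v.1, Finset.mem_union_right _ v.2⟩ = z2 v),
          jointMu ι C₁ C₂ b1 b2 bS x) :=
  stmt15_general ι C₁ C₂ b1 b2 bS h1pos h1sum h2pos h1marg h2marg
end
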